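/- For every n ≥ 0 and k ≥ 0, the generating-function coefficient identity holds: the sequence (C_n^(k))_{n≥0} is the (k+1)-fold convolution power of the Catalan sequence, i.e., the coefficient of x^n in c(x)^{k+1} equals C_n^(k), where c(x) = sum_{n≥0} C_n x^n is the Catalan number generating function. -/

import Mathlib

def gc (n k : ℕ) : ℚ := ((k : ℚ) + 1) / (2 * (n : ℚ) + (k : ℚ) + 1) * ((2 * n + k + 1).choose n : ℚ)

def cat (n : ℕ) : ℚ := 1 / ((n : ℚ) + 1) * ((2 * n).choose n : ℚ)

def Cond {n : ℕ} (u : Fin n → ℕ) : Prop :=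
  ∀ i j : Fin n, i < j →
    ¬(1 ≤ (u j : ℤ) - (((j : ℕ) : ℤ) - ((i : ℕ) : ℤ)) ∧
      (u j : ℤ) - (((j : ℕ) : ℤ) - ((i : ℕ) : ℤ)) ≤ (u i : ℤ) - 1)

/-!
Write `a n k` for the coefficient of `x^n` in `c(x)^(k+1)`. The functional equation
`c = 1 + x c²` gives `c^(k+2) = c^(k+1) + x c^(k+3)`, i.e. the recurrence
`a (n+1) (k+1) = a (n+1) k + a n (k+2)`, with boundary values `a 0 k = 1` and `a n 0 = C_n`.
The closed form `C_n^(k)` satisfies the same recurrence and boundary values (a factorial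
identity), so the two agree by induction on `n`, and for fixed `n + 1` by induction on `k`.
-/

open PowerSeries

theorem cat_eq_catalan (n : ℕ) : cat n = catalan n := by
  have h : ((n : ℚ) + 1) * catalan n = (2 * n).choose n := by
    exact_mod_cast succ_mul_catalan_eq_centralBinom n
  rw [cat, ← h]
  field_simp

theorem mk_cat_eq_map_catalanSeries : mk cat = map (Nat.castRingHom ℚ) catalanSeries := by
  ext n
  simp [cat_eq_catalan]

theorem mk_cat_sq_mul_X_add_one : mk cat ^ 2 * X + 1 = mk cat := by
  simpa [← mk_cat_eq_map_catalanSeries] using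
    congrArg (map (Nat.castRingHom ℚ)) catalanSeries_sq_mul_X_add_one

theorem pow_add_two_eq_of_sq_mul_add_one_eq {R : Type*} [CommSemiring R] {f x : R}
    (hf : f ^ 2 * x + 1 = f) (k : ℕ) : f ^ (k + 2) = f ^ (k + 1) + x * f ^ (k + 3) := by
  calc f ^ (k + 2) = f ^ (k + 1) * f := pow_succ f (k + 1)
    _ = f ^ (k + 1) * (f ^ 2 * x + 1) := by rw [hf]
    _ = f ^ (k + 1) + x * f ^ (k + 3) := by ring

theorem gc_eq_factorial (n k : ℕ) :
    gc n k = (k + 1) * (2 * n + k).factorial / (n.factorial * (n + k + 1).factorial) := by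
  rw [gc, Nat.cast_choose ℚ (by omega : n ≤ 2 * n + k + 1),
    show 2 * n + k + 1 - n = n + k + 1 by omega, Nat.factorial_succ]
  push_cast
  field_simp

theorem gc_zero_left (k : ℕ) : gc 0 k = 1 := by
  have hk : (k : ℚ) + 1 ≠ 0 := by positivity
  simp [gc, hk]

theorem gc_zero_right (n : ℕ) : gc n 0 = cat n := by
  rw [gc_eq_factorial, cat, Nat.cast_choose ℚ (by omega : n ≤ 2 * n),
    show 2 * n - n = n by omega, Nat.factorial_succ]
  push_cast
  field_simp
  simp

theorem gc_succ_succ (n k : ℕ) : gc (n + 1) (k + 1) = gc (n + 1) k + gc n (k + 2) := by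
  rw [gc_eq_factorial, gc_eq_factorial, gc_eq_factorial,
    show 2 * (n + 1) + (k + 1) = 2 * n + k + 2 + 1 by omega,
    show 2 * (n + 1) + k = 2 * n + k + 2 by omega,
    show 2 * n + (k + 2) = 2 * n + k + 2 by omega,
    show n + 1 + (k + 1) + 1 = n + k + 2 + 1 by omega,
    show n + 1 + k + 1 = n + k + 2 by omega,
    show n + (k + 2) + 1 = n + k + 2 + 1 by omega,
    Nat.factorial_succ (2 * n + k + 2), Nat.factorial_succ (n + k + 2), Nat.factorial_succ n]
  push_cast
  field_simp
  ring

theorem stmt2 (n k : ℕ) :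
    PowerSeries.coeff (R := ℚ) n ((PowerSeries.mk cat) ^ (k + 1)) = gc n k := by
  induction n generalizing k with
  | zero => simp [coeff_zero_eq_constantCoeff, cat, gc_zero_left]
  | succ n ih =>
    induction k with
    | zero => simp [gc_zero_right]
    | succ k ihk =>
      rw [pow_add_two_eq_of_sq_mul_add_one_eq mk_cat_sq_mul_X_add_one, map_add,
        coeff_succ_X_mul, ihk, ih, gc_succ_succ]
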